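/- Let R ⊆ S be a ring extension and let T, U be intermediate rings that are splitters at subsets X and Y of MSupp_R(S/R) respectively (i.e., MSupp_R(T/R) = X, MSupp_R(S/T) = X^c, MSupp_R(U/R) = Y, MSupp_R(S/U) = Y^c). If X ⊆ Y then T ⊆ U, and conversely if T ⊆ U then X ⊆ Y. -/

import Mathlib

/-! A containment `B ⊆ A` of intermediate rings is detected by `MSupp(B/A) = ∅`, since an
element of `B \ A` has a proper colon ideal `(A : x)`, and any maximal ideal containing it lies
in `MSupp(B/A)`. If `X ⊆ Y`, then `MSupp(T/U)` lies both in `MSupp(T/R) = X` and in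
`MSupp(S/U) = Yᶜ`, so it is empty. -/

variable {R S : Type*} [CommRing R] [CommRing S] [Algebra R S]

/-- For intermediate rings `A ≤ B` of the extension `R ⊆ S`, `MSupp A B` is the set of
maximal ideals `M` of `R` at which the localization of the `R`-module `B/A` is nonzero:
the class of `x ∈ B` is nonzero in `(B/A)_M` iff `s • x ∉ A` for all `s ∉ M`. -/
def MSupp (A B : Subalgebra R S) : Set (Ideal R) :=
  {M | M.IsMaximal ∧ ∃ x ∈ B, ∀ s : R, s ∉ M → s • x ∉ A}

/-- `T` is the splitter of `R ⊆ S` at `X`: `MSupp(T/R) = X` and `MSupp(S/T)` is the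
complement of `X` in `MSupp(S/R)`. -/
def IsSplitter (T : Subalgebra R S) (X : Set (Ideal R)) : Prop :=
  MSupp (⊥ : Subalgebra R S) T = X ∧
    MSupp T (⊤ : Subalgebra R S) =
      MSupp (⊥ : Subalgebra R S) (⊤ : Subalgebra R S) \ X

theorem Submodule.exists_isMaximal_forall_smul_notMem {V : Type*} [AddCommGroup V]
    [Module R V] {N : Submodule R V} {x : V} (hx : x ∉ N) :
    ∃ M : Ideal R, M.IsMaximal ∧ ∀ s ∉ M, s • x ∉ N := by
  have hcolon : N.colon {x} ≠ ⊤ := by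
    rwa [Ne, Submodule.colon_eq_top_iff_subset, Set.singleton_subset_iff]
  obtain ⟨M, hM, hle⟩ := Ideal.exists_le_maximal _ hcolon
  exact ⟨M, hM, fun s hs hsx => hs (hle (Submodule.mem_colon_singleton.mpr hsx))⟩

theorem MSupp_mono {A A' B B' : Subalgebra R S} (hA : A' ≤ A) (hB : B ≤ B') :
    MSupp A B ⊆ MSupp A' B' :=
  fun _ ⟨hM, x, hxB, hx⟩ => ⟨hM, x, hB hxB, fun s hs hsx => hx s hs (hA hsx)⟩

theorem MSupp_eq_empty_iff {A B : Subalgebra R S} : MSupp A B = ∅ ↔ B ≤ A := by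
  refine ⟨fun h x hxB => ?_, fun hBA => ?_⟩
  · by_contra hxA
    obtain ⟨M, hM, hx⟩ :=
      Submodule.exists_isMaximal_forall_smul_notMem (N := Subalgebra.toSubmodule A) hxA
    exact h.subset ⟨hM, x, hxB, hx⟩
  · refine Set.eq_empty_of_forall_notMem fun M ⟨hM, x, hxB, hx⟩ => ?_
    exact hx 1 (M.ne_top_iff_one.mp hM.ne_top) (by simpa using hBA hxB)

theorem splitter_mono_general (T U : Subalgebra R S) (X Y : Set (Ideal R))
    (hT : IsSplitter T X) (hU : IsSplitter U Y) :
    X ⊆ Y ↔ T ≤ U := by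
  obtain ⟨hTX, -⟩ := hT
  obtain ⟨hUY, hUc⟩ := hU
  refine ⟨fun hXY => MSupp_eq_empty_iff.mp ?_, fun hTU => ?_⟩
  · refine Set.eq_empty_of_forall_notMem fun M hM => ?_
    have hMX : M ∈ X := hTX ▸ MSupp_mono bot_le le_rfl hM
    have hMY : M ∉ Y := (hUc ▸ MSupp_mono le_rfl le_top hM).2
    exact hMY (hXY hMX)
  · exact hTX ▸ hUY ▸ MSupp_mono le_rfl hTU

/-- For splitters `T = σ(X)` and `U = σ(Y)`: `X ⊆ Y ↔ T ⊆ U`. -/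
theorem splitter_mono (T U : Subalgebra R S) (X Y : Set (Ideal R))
    (hX : X ⊆ MSupp (⊥ : Subalgebra R S) (⊤ : Subalgebra R S))
    (hY : Y ⊆ MSupp (⊥ : Subalgebra R S) (⊤ : Subalgebra R S))
    (hT : IsSplitter T X) (hU : IsSplitter U Y) :
    X ⊆ Y ↔ T ≤ U :=
  splitter_mono_general T U X Y hT hU
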